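/- arXiv:1611.00476 — 3 statements merged into one kernel-verified Lean document; each statement's English description precedes it below -/
import Mathlib

section
/- Let W_T := α(T*) v⁽ⁿ⁾ θ(T) where T ∈ (ρ_ξ, γ_ρⁿ) is an isometry, with the standing assumptions: α : M → P a *-isomorphism, θ a *-isomorphism from the intertwiner algebra (γ_ρⁿ, γ_ρⁿ) onto (γ_σⁿ, γ_σⁿ) such that Ad(v⁽ⁿ⁾*)∘α agrees with θ on (γ_ρⁿ, γ_ρⁿ), and θ maps isometries in (ρ_ξ, γ_ρⁿ) to isometries in (σ_{F(ξ)}, γ_σⁿ). Then for any two isometries T, S ∈ (ρ_ξ, γ_ρⁿ), W_T is a unitary and W_T = W_S. -/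
/-!
For intertwiners `R, R' ∈ (ρ, γ)` the product `R R'*` lies in `(γ, γ)`, on which
`α = Ad v ∘ θ`; hence `α(R R'*) = v θ(R) θ(R')* v*`. Substituting this into `W_T W_S*` and
`W_T* W_S` collapses them to `α(T*T S*S) = 1` and `θ(T*T S*S) = 1` respectively. So every `W_T`
has every `W_S` as a two-sided inverse, which makes `W_T` unitary and forces
`W_T = W_T (W_S* W_S) = W_S`.
-/

/-- `R ∈ (ρ, γ)`. -/
def IsIntertwiner {M : Type*} [Mul M] (ρ γ : M → M) (R : M) : Prop :=
  ∀ x, R * ρ x = γ x * R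

namespace IsIntertwiner

variable {M : Type*} [Monoid M] {ρ γ σ : M → M} {R R' : M}

theorem mul (hR : IsIntertwiner ρ γ R) (hR' : IsIntertwiner σ ρ R') :
    IsIntertwiner σ γ (R * R') := fun x => by
  rw [mul_assoc, hR' x, ← mul_assoc, hR x, mul_assoc]

variable [StarMul M]

protected theorem star (hρ : ∀ x, ρ (star x) = star (ρ x))
    (hγ : ∀ x, γ (star x) = star (γ x))
    (hR : IsIntertwiner ρ γ R) : IsIntertwiner γ ρ (star R) := fun x => by
  simpa only [star_mul, star_star, hρ, hγ] using (congrArg star (hR (star x))).symm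

theorem mul_star (hρ : ∀ x, ρ (star x) = star (ρ x)) (hγ : ∀ x, γ (star x) = star (γ x))
    (hR : IsIntertwiner ρ γ R) (hR' : IsIntertwiner ρ γ R') :
    IsIntertwiner γ γ (R * star R') :=
  hR.mul (hR'.star hρ hγ)

end IsIntertwiner

section Twist

variable {M P : Type*} [Monoid M] [StarMul M] [Monoid P] [StarMul P]
  (α : M ≃* P) (θ : M → P) (v : P)

/-- `W_T` -/
def twist (T : M) : P :=
  α (star T) * v * θ T

variable {α θ v}

theorem star_twist (hαstar : ∀ x, α (star x) = star (α x)) (T : M) :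
    star (twist α θ v T) = star (θ T) * star v * α T := by
  rw [twist, star_mul, star_mul, ← hαstar, star_star, mul_assoc]

variable {ρ γ : M → M}

theorem map_mul_star_of_isIntertwiner
    (hθmul : ∀ a b, θ (a * b) = θ a * θ b) (hθstar : ∀ a, θ (star a) = star (θ a))
    (hρstar : ∀ x, ρ (star x) = star (ρ x)) (hγstar : ∀ x, γ (star x) = star (γ x))
    (hαθ : ∀ X : M, IsIntertwiner γ γ X → α X = v * θ X * star v)
    {R R' : M} (hR : IsIntertwiner ρ γ R) (hR' : IsIntertwiner ρ γ R') :
    α (R * star R') = v * (θ R * star (θ R')) * star v := by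
  rw [hαθ _ (hR.mul_star hρstar hγstar hR'), hθmul, hθstar]

theorem twist_mul_star_twist
    (hαstar : ∀ x, α (star x) = star (α x))
    (hθmul : ∀ a b, θ (a * b) = θ a * θ b) (hθstar : ∀ a, θ (star a) = star (θ a))
    (hρstar : ∀ x, ρ (star x) = star (ρ x)) (hγstar : ∀ x, γ (star x) = star (γ x))
    (hαθ : ∀ X : M, IsIntertwiner γ γ X → α X = v * θ X * star v)
    {T S : M} (hT : star T * T = 1) (hTint : IsIntertwiner ρ γ T)
    (hS : star S * S = 1) (hSint : IsIntertwiner ρ γ S) :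
    twist α θ v T * star (twist α θ v S) = 1 := by
  have hTS := map_mul_star_of_isIntertwiner hθmul hθstar hρstar hγstar hαθ hTint hSint
  calc twist α θ v T * star (twist α θ v S)
      = α (star T) * (v * (θ T * star (θ S)) * star v) * α S := by
        rw [star_twist hαstar]; simp only [twist, mul_assoc]
    _ = α (star T * (T * star S) * S) := by rw [← hTS, ← map_mul, ← map_mul]
    _ = 1 := by simp only [← mul_assoc, hT, one_mul, hS, map_one]

theorem star_twist_mul_twist
    (hαstar : ∀ x, α (star x) = star (α x))
    (hθmul : ∀ a b, θ (a * b) = θ a * θ b) (hθstar : ∀ a, θ (star a) = star (θ a))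
    (hθ1 : θ 1 = 1)
    (hρstar : ∀ x, ρ (star x) = star (ρ x)) (hγstar : ∀ x, γ (star x) = star (γ x))
    (hv : star v * v = 1)
    (hαθ : ∀ X : M, IsIntertwiner γ γ X → α X = v * θ X * star v)
    {T S : M} (hT : star T * T = 1) (hTint : IsIntertwiner ρ γ T)
    (hS : star S * S = 1) (hSint : IsIntertwiner ρ γ S) :
    star (twist α θ v T) * twist α θ v S = 1 := by
  have hTS := map_mul_star_of_isIntertwiner hθmul hθstar hρstar hγstar hαθ hTint hSint
  have hv' : ∀ x, star v * (v * x) = x := fun x => by rw [← mul_assoc, hv, one_mul]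
  calc star (twist α θ v T) * twist α θ v S
      = star (θ T) * (star v * α (T * star S) * v) * θ S := by
        rw [star_twist hαstar, twist, map_mul]; simp only [mul_assoc]
    _ = star (θ T) * θ T * (star (θ S) * θ S) := by rw [hTS]; simp only [mul_assoc, hv']
    _ = θ (star T * T * (star S * S)) := by simp only [hθmul, hθstar]
    _ = 1 := by rw [hT, hS, mul_one, hθ1]

end Twist

theorem stmt9_general {M P : Type*} [Ring M] [StarRing M] [Ring P] [StarRing P]
    (α : M ≃* P) (hαstar : ∀ x, α (star x) = star (α x))
    (θ : M → P)
    (hθmul : ∀ a b, θ (a * b) = θ a * θ b)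
    (hθstar : ∀ a, θ (star a) = star (θ a))
    (hθ1 : θ 1 = 1)
    (ρξ γn : M → M)
    (hρstar : ∀ x, ρξ (star x) = star (ρξ x))
    (hγstar : ∀ x, γn (star x) = star (γn x))
    (v : P) (hv₂ : star v * v = 1)
    (hαθ : ∀ X : M, (∀ x, X * γn x = γn x * X) → α X = v * θ X * star v)
    (T S : M)
    (hT : star T * T = 1) (hTint : ∀ x, T * ρξ x = γn x * T)
    (hS : star S * S = 1) (hSint : ∀ x, S * ρξ x = γn x * S) :
    (star (α (star T) * v * θ T) * (α (star T) * v * θ T) = 1 ∧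
      (α (star T) * v * θ T) * star (α (star T) * v * θ T) = 1) ∧
    α (star T) * v * θ T = α (star S) * v * θ S := by
  have hW {T S : M} := twist_mul_star_twist hαstar hθmul hθstar hρstar hγstar hαθ
    (T := T) (S := S)
  have hW' {T S : M} := star_twist_mul_twist hαstar hθmul hθstar hθ1 hρstar hγstar hv₂ hαθ
    (T := T) (S := S)
  exact ⟨⟨hW' hT hTint hT hTint, hW hT hTint hT hTint⟩,
    left_inv_eq_right_inv (hW hT hTint hS hSint) (hW' hS hSint hS hSint)⟩

/-- with `W_T := α(T*) vⁿ θ(T)` for an isometry `T ∈ (ρ_ξ, γⁿ)`,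
where `Ad(vⁿ*) ∘ α = θ` on the relative commutant `(γⁿ, γⁿ)` and θ is a
multiplicative *-preserving map, `W_T` is a unitary and `W_T = W_S` for any two
isometries `T, S ∈ (ρ_ξ, γⁿ)`. -/
theorem stmt9 {M P : Type*} [Ring M] [StarRing M] [Ring P] [StarRing P]
    (α : M ≃* P) (hαstar : ∀ x, α (star x) = star (α x))
    (θ : M → P)
    (hθmul : ∀ a b, θ (a * b) = θ a * θ b)
    (hθstar : ∀ a, θ (star a) = star (θ a))
    (hθ1 : θ 1 = 1)
    (ρξ γn : M → M)
    (hρstar : ∀ x, ρξ (star x) = star (ρξ x))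
    (hγstar : ∀ x, γn (star x) = star (γn x))
    (v : P) (hv₁ : v * star v = 1) (hv₂ : star v * v = 1)
    (hαθ : ∀ X : M, (∀ x, X * γn x = γn x * X) → α X = v * θ X * star v)
    (T S : M)
    (hT : star T * T = 1) (hTint : ∀ x, T * ρξ x = γn x * T)
    (hS : star S * S = 1) (hSint : ∀ x, S * ρξ x = γn x * S) :
    (star (α (star T) * v * θ T) * (α (star T) * v * θ T) = 1 ∧
      (α (star T) * v * θ T) * star (α (star T) * v * θ T) = 1) ∧
    α (star T) * v * θ T = α (star S) * v * θ S :=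
  stmt9_general α hαstar θ hθmul hθstar hθ1 ρξ γn hρstar hγstar v hv₂ hαθ T S hT hTint hS hSint
end

section
/- With the notation of the main construction, the unitary W_T is independent of the level n: if T ∈ (ρ_ξ, γ_ρⁿ) is an isometry and R̄_ρ ∈ (id, γ_ρ) is an isometry with θ(R̄_ρ) = R̄_σ = v⁽¹⁾* α(R̄_ρ), then W_{R̄_ρ T} = W_T, where R̄_ρ T ∈ (ρ_ξ, γ_ρⁿ⁺¹) and W_S = α(S*) v⁽ᵐ⁾ θ(S) for S ∈ (ρ_ξ, γ_ρᵐ). -/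
/- Cancelling `v⁽¹⁾` against `α(R̄ρ*)` turns the extra factor `v⁽¹⁾ γσ(·)` of level `n + 1`
into `R̄σ* γσ(·) R̄σ`, and since `R̄σ ∈ (id, γσ)` is an isometry this conjugation is the
identity on `v⁽ⁿ⁾`. -/

theorem star_mul_mul_mul_eq_of_intertwines {P : Type*} [Monoid P] [StarMul P] {γ : P → P}
    {R u a : P} (hR : R = star u * a) (hRint : ∀ y, R * y = γ y * R) (hRiso : star R * R = 1)
    (x : P) : star a * (u * γ x) * R = x :=
  calc star a * (u * γ x) * R = star R * (γ x * R) := by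
        rw [hR, star_mul, star_star, mul_assoc, mul_assoc, mul_assoc]
    _ = x := by rw [← hRint, ← mul_assoc, hRiso, one_mul]

theorem stmt10_general {M P : Type*} [Ring M] [StarRing M] [Ring P] [StarRing P]
    (α : M ≃* P) (hαstar : ∀ x, α (star x) = star (α x))
    (θ : M → P)
    (hθmul : ∀ a b, θ (a * b) = θ a * θ b)
    (hθstar : ∀ a, θ (star a) = star (θ a))
    (hθ1 : θ 1 = 1)
    (γσ : P → P)
    (v : ℕ → P) (hv : ∀ n, v (n + 1) = v 1 * γσ (v n))
    (Rb T : M) (n : ℕ)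
    (hRbiso : star Rb * Rb = 1)
    (hRσ : θ Rb = star (v 1) * α Rb)
    (hRσint : ∀ y : P, θ Rb * y = γσ y * θ Rb) :
    α (star (Rb * T)) * v (n + 1) * θ (Rb * T) =
      α (star T) * v n * θ T := by
  have hRσiso : star (θ Rb) * θ Rb = 1 := by rw [← hθstar, ← hθmul, hRbiso, hθ1]
  have hlevel : α (star Rb) * v (n + 1) * θ Rb = v n := by
    rw [hv, hαstar]
    exact star_mul_mul_mul_eq_of_intertwines hRσ hRσint hRσiso (v n)
  calc α (star (Rb * T)) * v (n + 1) * θ (Rb * T)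
      = α (star T) * (α (star Rb) * v (n + 1) * θ Rb) * θ T := by
        simp only [star_mul, map_mul, hθmul, mul_assoc]
    _ = α (star T) * v n * θ T := by rw [hlevel]

/-- the unitary `W_T` is independent of the level `n`:
`W_{R̄ρ T} = W_T`, where `W_S = α(S*) v⁽ᵐ⁾ θ(S)`, `v⁽ⁿ⁺¹⁾ = v⁽¹⁾ γ_σ(v⁽ⁿ⁾)`,
`θ(R̄ρ) = R̄σ = v⁽¹⁾* α(R̄ρ)` and `R̄σ ∈ (id, γσ)` is an isometry. -/
theorem stmt10 {M P : Type*} [Ring M] [StarRing M] [Ring P] [StarRing P]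
    (α : M ≃* P) (hαstar : ∀ x, α (star x) = star (α x))
    (θ : M → P)
    (hθmul : ∀ a b, θ (a * b) = θ a * θ b)
    (hθstar : ∀ a, θ (star a) = star (θ a))
    (hθ1 : θ 1 = 1)
    (γσ : P → P)
    (v : ℕ → P) (hv : ∀ n, v (n + 1) = v 1 * γσ (v n))
    (Rb T : M) (n : ℕ)
    (hRbiso : star Rb * Rb = 1) (hTiso : star T * T = 1)
    (hRσ : θ Rb = star (v 1) * α Rb)
    (hRσint : ∀ y : P, θ Rb * y = γσ y * θ Rb) :
    α (star (Rb * T)) * v (n + 1) * θ (Rb * T) =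
      α (star T) * v n * θ T :=
  stmt10_general α hαstar θ hθmul hθstar hθ1 γσ v hv Rb T n hRbiso hRσ hRσint
end

section
/- With the standing assumptions of the main construction, W_T is an intertwiner from σ_{F(ξ)}∘α to α∘ρ_ξ: for all x ∈ M, α(ρ_ξ(x)) W_T = W_T σ_{F(ξ)}(α(x)), where W_T = α(T*) v⁽ⁿ⁾ θ(T) for an isometry T ∈ (ρ_ξ, γ_ρⁿ). -/
/-! Taking adjoints in `T ρ_ξ(x) = γ_ρⁿ(x) T` shows that `T*` intertwines `γ_ρⁿ` with `ρ_ξ`; transporting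
by `α` and then composing with the intertwiners `v⁽ⁿ⁾` and `θ(T)` gives the claim. -/

theorem mul_star_eq_star_mul_of_intertwines {M : Type*} [Monoid M] [StarMul M] {ρ γ : M → M}
    (hρ : ∀ x, ρ (star x) = star (ρ x)) (hγ : ∀ x, γ (star x) = star (γ x))
    {T : M} (hT : ∀ x, T * ρ x = γ x * T) (x : M) :
    ρ x * star T = star T * γ x := by
  simpa [hρ, hγ, star_mul] using congrArg star (hT (star x))

theorem stmt11_general {M P : Type*} [Ring M] [StarRing M] [Ring P] [StarRing P]
    (α : M ≃* P)
    (ρξ γn : M → M)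
    (hρstar : ∀ x, ρξ (star x) = star (ρξ x))
    (hγstar : ∀ x, γn (star x) = star (γn x))
    (σξ γσn : P → P)
    (T : M) (hTint : ∀ x, T * ρξ x = γn x * T)
    (θT : P) (hθT : ∀ y, θT * σξ y = γσn y * θT)
    (v : P) (hv : ∀ x, α (γn x) * v = v * γσn (α x)) :
    ∀ x, α (ρξ x) * (α (star T) * v * θT) =
      (α (star T) * v * θT) * σξ (α x) := by
  intro x
  have hTstar := mul_star_eq_star_mul_of_intertwines hρstar hγstar hTint x
  calc α (ρξ x) * (α (star T) * v * θT)
      = α (ρξ x * star T) * v * θT := by simp only [map_mul, mul_assoc]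
    _ = α (star T) * (α (γn x) * v) * θT := by rw [hTstar, map_mul]; simp only [mul_assoc]
    _ = α (star T) * v * (θT * σξ (α x)) := by rw [hv, hθT]; simp only [mul_assoc]
    _ = (α (star T) * v * θT) * σξ (α x) := by simp only [mul_assoc]

/-- `W_T = α(T*) v⁽ⁿ⁾ θ(T)` intertwines `σ_{F(ξ)} ∘ α` and
`α ∘ ρ_ξ`: `α(ρ_ξ(x)) W_T = W_T σ_{F(ξ)}(α(x))` for all `x`. -/
theorem stmt11 {M P : Type*} [Ring M] [StarRing M] [Ring P] [StarRing P]
    (α : M ≃* P)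
    (ρξ γn : M → M)
    (hρstar : ∀ x, ρξ (star x) = star (ρξ x))
    (hγstar : ∀ x, γn (star x) = star (γn x))
    (σξ γσn : P → P)
    (T : M) (hTiso : star T * T = 1) (hTint : ∀ x, T * ρξ x = γn x * T)
    (θT : P) (hθT : ∀ y, θT * σξ y = γσn y * θT)
    (v : P) (hv : ∀ x, α (γn x) * v = v * γσn (α x)) :
    ∀ x, α (ρξ x) * (α (star T) * v * θT) =
      (α (star T) * v * θT) * σξ (α x) :=
  stmt11_general α ρξ γn hρstar hγstar σξ γσn T hTint θT hθT v hv
end
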